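/- Let w = v·t_r ∈ Ŵ_max be a maximal element with first layer ideal I^w, and let Ξ(I^w) be the set of maximal elements of Δ⁺ \ I^w with respect to ≼. Let D_max = {x ∈ V : (x,α) ≤ 1 for all α ∈ Π and (x,θ) ≥ 0}. Then #Ξ(I^w) = k if and only if v(r) lies on a face of codimension k of the simplex D_max. -/

import Mathlib

open scoped RealInnerProductSpace
open Module

noncomputable section

variable {V : Type*} [NormedAddCommGroup V] [InnerProductSpace ℝ V]

/-- The underlying function of the orthogonal reflection in the hyperplane
orthogonal to `α` (the identity if `α = 0`). -/
def reflFun (α : V) (x : V) : V := x - (2 * ⟪α, x⟫ / ⟪α, α⟫) • α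

lemma reflFun_involutive (α : V) : Function.Involutive (reflFun α) := by
  intro x
  by_cases h : α = 0
  · simp [reflFun, h]
  · have hs : ⟪α, α⟫ ≠ 0 := inner_self_ne_zero.mpr h
    have h1 : ⟪α, x - (2 * ⟪α, x⟫ / ⟪α, α⟫) • α⟫ = -⟪α, x⟫ := by
      rw [inner_sub_right, real_inner_smul_right]
      field_simp
      ring
    simp only [reflFun]
    rw [h1, show 2 * -⟪α, x⟫ / ⟪α, α⟫ = -(2 * ⟪α, x⟫ / ⟪α, α⟫) by ring,
      neg_smul, sub_neg_eq_add]
    abel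

/-- The orthogonal reflection in the hyperplane orthogonal to `α`, as a linear
equivalence (the identity if `α = 0`). -/
def sRefl (α : V) : V ≃ₗ[ℝ] V where
  toFun := reflFun α
  map_add' x y := by
    simp only [reflFun, inner_add_right]
    rw [show 2 * (⟪α, x⟫ + ⟪α, y⟫) / ⟪α, α⟫
        = 2 * ⟪α, x⟫ / ⟪α, α⟫ + 2 * ⟪α, y⟫ / ⟪α, α⟫ by ring, add_smul]
    abel
  map_smul' c x := by
    simp only [reflFun, real_inner_smul_right, RingHom.id_apply, smul_sub, smul_smul]
    congr 2
    ring
  invFun := reflFun α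
  left_inv := reflFun_involutive α
  right_inv := reflFun_involutive α

/-- The coroot `α∨ = 2α/(α,α)` of a vector `α`. -/
def corootVec (α : V) : V := (2 / ⟪α, α⟫) • α

/-- The (affine) hyperplane `{x | (x, μ) = k}`. -/
def rootHyperplane (μ : V) (k : ℝ) : Set V := {x : V | ⟪x, μ⟫ = k}

/-- `R` is a region of the hyperplane arrangement whose hyperplanes are encoded by the
pairs `(μ, k) ∈ A` (the hyperplane `{x | (x,μ) = k}`): a connected component of the
complement of the union of the hyperplanes. -/
def IsRegionOf (A : Set (V × ℝ)) (R : Set V) : Prop :=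
  ∃ x ∈ (⋃ h ∈ A, rootHyperplane h.1 h.2)ᶜ,
    R = connectedComponentIn (⋃ h ∈ A, rootHyperplane h.1 h.2)ᶜ x

open Classical in
/-- The characteristic polynomial of the hyperplane arrangement encoded by
`A : Set (V × ℝ)` in an ambient space of dimension `p`, evaluated at `t`, via
Whitney's theorem: `χ(A,t) = ∑ (-1)^{#S} t^{dim ∩ S}`, the sum being over all central
subarrangements `S ⊆ A` (junk value `0` if `A` is infinite). -/
noncomputable def charPolyEval (p : ℕ) (A : Set (V × ℝ)) (t : ℝ) : ℝ :=
  if hA : A.Finite then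
    ∑ S ∈ hA.toFinset.powerset,
      if (⋂ h ∈ (S : Set (V × ℝ)), rootHyperplane h.1 h.2).Nonempty then
        (-1 : ℝ) ^ S.card *
          t ^ (p - Module.finrank ℝ (Submodule.span ℝ (Prod.fst '' (S : Set (V × ℝ)))))
      else 0
  else 0

/-- The linear action of `w = v·t_r ∈ Ŵ` on `V ⊕ ℝδ`:
`w(μ + kδ) = v(μ) + (k - (μ,r))δ`. -/
def affAct (v : V ≃ₗ[ℝ] V) (r : V) (β : V × ℝ) : V × ℝ :=
  (v β.1, β.2 - ⟪β.1, r⟫)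

/-- The linear action of `w⁻¹` on `V ⊕ ℝδ`, for `w = v·t_r ∈ Ŵ`:
`w⁻¹(μ + kδ) = v⁻¹(μ) + (k + (v⁻¹μ, r))δ`. -/
def affActInv (v : V ≃ₗ[ℝ] V) (r : V) (β : V × ℝ) : V × ℝ :=
  (v.symm β.1, β.2 + ⟪v.symm β.1, r⟫)

/-- The affine `∗`-action of `w = v·t_r ∈ Ŵ` on `V`: `w ∗ x = v(x + r)`. -/
def affStar (v : V ≃ₗ[ℝ] V) (r : V) (x : V) : V := v (x + r)

/-- The affine `∗`-action of `w⁻¹` on `V`, for `w = v·t_r ∈ Ŵ`: `w⁻¹ ∗ x = v⁻¹(x) - r`. -/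
def affStarInv (v : V ≃ₗ[ℝ] V) (r : V) (x : V) : V := v.symm x - r

/-- An irreducible reduced crystallographic root system `Δ` of rank `p`, spanning a real
inner product space `V`, together with a choice of positive system `Δ⁺ = pos`, simple
roots `α₁, …, α_p`, and the highest root `θ`. -/
structure RootSystemData (V : Type*) [NormedAddCommGroup V] [InnerProductSpace ℝ V]
    (p : ℕ) where
  /-- the set of roots -/
  Δ : Set V
  finite : Δ.Finite
  zero_notMem : (0 : V) ∉ Δ
  span_eq_top : Submodule.span ℝ Δ = ⊤
  finrank_eq : Module.finrank ℝ V = p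
  neg_mem : ∀ α ∈ Δ, -α ∈ Δ
  /-- reduced: the only multiples of a root that are roots are `±α` -/
  reduced : ∀ α ∈ Δ, ∀ c : ℝ, c • α ∈ Δ → c = 1 ∨ c = -1
  /-- crystallographic: Cartan integers -/
  crystallographic : ∀ α ∈ Δ, ∀ β ∈ Δ, ∃ n : ℤ, 2 * ⟪α, β⟫ / ⟪α, α⟫ = (n : ℝ)
  reflect_mem : ∀ α ∈ Δ, ∀ β ∈ Δ, sRefl α β ∈ Δ
  /-- irreducible: no splitting into two orthogonal parts -/
  irred : ∀ S T : Set V, Δ = S ∪ T → (∀ a ∈ S, ∀ b ∈ T, ⟪a, b⟫ = 0) → S = ∅ ∨ T = ∅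
  /-- the simple roots `α₁, …, α_p` -/
  simpleRoot : Fin p → V
  simpleRoot_mem : ∀ i, simpleRoot i ∈ Δ
  simpleRoot_indep : LinearIndependent ℝ simpleRoot
  /-- the positive roots `Δ⁺` -/
  pos : Set V
  pos_def : pos = {α ∈ Δ | ∃ c : Fin p → ℕ, α = ∑ i, (c i : ℝ) • simpleRoot i}
  pos_or_neg : ∀ α ∈ Δ, α ∈ pos ∨ -α ∈ pos
  /-- the highest root -/
  θ : V
  θ_mem : θ ∈ pos
  θ_highest : ∀ α ∈ pos, ∃ c : Fin p → ℕ, θ = α + ∑ i, (c i : ℝ) • simpleRoot i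

namespace RootSystemData

variable {p : ℕ} (RS : RootSystemData V p)

/-- The coroot lattice `Q∨`, generated by the coroots of the roots. -/
def corootLattice : AddSubgroup V := AddSubgroup.closure (corootVec '' RS.Δ)

/-- The coweight lattice `P∨ = {x | (x, α) ∈ ℤ for all roots α}`. -/
def coweightLattice : AddSubgroup V where
  carrier := {x : V | ∀ α ∈ RS.Δ, ∃ n : ℤ, ⟪x, α⟫ = (n : ℝ)}
  zero_mem' := fun α _ => ⟨0, by simp⟩
  add_mem' := by
    intro x y hx hy α hα
    obtain ⟨n, hn⟩ := hx α hα
    obtain ⟨m, hm⟩ := hy α hα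
    exact ⟨n + m, by rw [inner_add_left, hn, hm]; push_cast; ring⟩
  neg_mem' := by
    intro x hx α hα
    obtain ⟨n, hn⟩ := hx α hα
    exact ⟨-n, by rw [inner_neg_left, hn]; push_cast; ring⟩

/-- The index of connection `f = [P∨ : Q∨]`. -/
noncomputable def indexOfConnection : ℕ :=
  RS.corootLattice.relIndex RS.coweightLattice

/-- The Weyl group `W`, generated by the reflections in the roots. -/
def weylGroup : Subgroup (V ≃ₗ[ℝ] V) :=
  Subgroup.closure {w : V ≃ₗ[ℝ] V | ∃ α ∈ RS.Δ, w = sRefl α}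

/-- The partial order `μ ≼ γ` on roots: `γ - μ` is a nonnegative integer combination of
the simple roots. -/
def rootLe (μ γ : V) : Prop :=
  ∃ c : Fin p → ℕ, γ = μ + ∑ i, (c i : ℝ) • RS.simpleRoot i

/-- An ideal of `Δ⁺`. -/
def IsIdeal (I : Set V) : Prop :=
  I ⊆ RS.pos ∧ ∀ γ ∈ I, ∀ μ ∈ RS.pos, γ + μ ∈ RS.Δ → γ + μ ∈ I

/-- An antichain in the poset `(Δ⁺, ≼)`. -/
def IsRootAntichain (Γ : Set V) : Prop :=
  Γ ⊆ RS.pos ∧ ∀ μ ∈ Γ, ∀ γ ∈ Γ, RS.rootLe μ γ → μ = γ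

/-- The set of minimal elements (generators, for an ideal) of a subset of `Δ⁺`. -/
def gens (I : Set V) : Set V := {γ ∈ I | ∀ μ ∈ I, RS.rootLe μ γ → μ = γ}

/-- The ideal `I⟨Γ⟩` generated by an antichain `Γ`. -/
def idealGen (Γ : Set V) : Set V := {μ ∈ RS.pos | ∃ γ ∈ Γ, RS.rootLe γ μ}

/-- The set `Ξ(I)` of maximal elements of `Δ⁺ \ I`. -/
def XiSet (I : Set V) : Set V :=
  {γ ∈ RS.pos \ I | ∀ μ ∈ RS.pos \ I, RS.rootLe γ μ → γ = μ}

/-- `k(μ, I)`: the minimal number of summands in an expression of `μ` as a sum of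
positive roots not in `I`. -/
noncomputable def kNum (I : Set V) (μ : V) : ℕ :=
  sInf {n : ℕ | ∃ f : Fin n → V, (∀ i, f i ∈ RS.pos \ I) ∧ μ = ∑ i, f i}

/-- A root is short if it is strictly shorter than the highest root `θ`. -/
def IsShort (α : V) : Prop := α ∈ RS.Δ ∧ ⟪α, α⟫ < ⟪RS.θ, RS.θ⟫

/-- The short positive roots `Δ⁺_s`. -/
def shortPos : Set V := {α ∈ RS.pos | ⟪α, α⟫ < ⟪RS.θ, RS.θ⟫}

/-- The long positive roots `Δ⁺_l`. -/
def longPos : Set V := {α ∈ RS.pos | ⟪α, α⟫ = ⟪RS.θ, RS.θ⟫}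

/-- `Δ` has roots of exactly two lengths, the squared length ratio (long over short)
being `ratio`. -/
def LengthRatio (ratio : ℝ) : Prop :=
  ∃ ls : ℝ, 0 < ls ∧ ls < ⟪RS.θ, RS.θ⟫ ∧
    (∀ α ∈ RS.Δ, ⟪α, α⟫ = ls ∨ ⟪α, α⟫ = ⟪RS.θ, RS.θ⟫) ∧
    (∃ α ∈ RS.Δ, ⟪α, α⟫ = ls) ∧ ⟪RS.θ, RS.θ⟫ = ratio * ls

/-- `Δ` has roots of two different lengths. -/
def TwoLengths : Prop := ∃ ratio : ℝ, RS.LengthRatio ratio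

/-- The simple roots `Π(Δ⁺_s)` of the root system `Δ_s` of short roots with respect to
the positive system `Δ⁺_s`: the short positive roots that are not sums of two short
positive roots. -/
def shortSimple : Set V :=
  {α ∈ RS.shortPos | ¬ ∃ β ∈ RS.shortPos, ∃ γ ∈ RS.shortPos, α = β + γ}

/-- The positive affine roots `Δ̂⁺`, an affine root `μ + kδ` being encoded as the pair
`(μ, k)`. -/
def affPos : Set (V × ℝ) :=
  {β : V × ℝ | β.1 ∈ RS.Δ ∧ (0 < β.2 ∨ (β.2 = 0 ∧ β.1 ∈ RS.pos))}

/-- A pair `(v, r)` with `v ∈ W`, `r ∈ Q∨` represents the element `w = v·t_r` of the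
affine Weyl group `Ŵ = W ⋉ Q∨`; it is dominant if `w(α) ∈ Δ̂⁺` for all `α ∈ Π`. -/
def IsDominantPair (v : V ≃ₗ[ℝ] V) (r : V) : Prop :=
  v ∈ RS.weylGroup ∧ r ∈ RS.corootLattice ∧
    ∀ i, affAct v r (RS.simpleRoot i, 0) ∈ RS.affPos

/-- `N(w) = {β ∈ Δ̂⁺ | w(β) ∈ -Δ̂⁺}` for `w = v·t_r`. -/
def Nset (v : V ≃ₗ[ℝ] V) (r : V) : Set (V × ℝ) :=
  {β : V × ℝ | β ∈ RS.affPos ∧ -(affAct v r β) ∈ RS.affPos}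

/-- The first layer ideal `I_w = {μ ∈ Δ⁺ | δ - μ ∈ N(w)}` of `w = v·t_r`. -/
def firstLayerIdeal (v : V ≃ₗ[ℝ] V) (r : V) : Set V :=
  {μ ∈ RS.pos | ((-μ, (1 : ℝ)) : V × ℝ) ∈ RS.Nset v r}

/-- `w = v·t_r` is minimal: dominant, and for every affine simple root `α ∈ Π̂`,
writing `w⁻¹(α) = kδ + μ`, one has `k ≥ -1`. -/
def IsMinimalPair (v : V ≃ₗ[ℝ] V) (r : V) : Prop :=
  RS.IsDominantPair v r ∧
    (∀ i, -1 ≤ (affActInv v r (RS.simpleRoot i, 0)).2) ∧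
    -1 ≤ (affActInv v r (-RS.θ, 1)).2

/-- `w = v·t_r` is maximal: dominant, and for every affine simple root `α ∈ Π̂`,
writing `w⁻¹(α) = kδ + μ`, one has `k ≤ 1`. -/
def IsMaximalPair (v : V ≃ₗ[ℝ] V) (r : V) : Prop :=
  RS.IsDominantPair v r ∧
    (∀ i, (affActInv v r (RS.simpleRoot i, 0)).2 ≤ 1) ∧
    (affActInv v r (-RS.θ, 1)).2 ≤ 1

/-- `w = v·t_r` is `s`-minimal: dominant, `k ≥ -1` for short simple `α`, and `k ≥ 0`
for `α ∈ Π̂_l = Π_l ∪ {α₀}`, where `w⁻¹(α) = kδ + μ`. -/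
def IsSMinimalPair (v : V ≃ₗ[ℝ] V) (r : V) : Prop :=
  RS.IsDominantPair v r ∧
    (∀ i, RS.IsShort (RS.simpleRoot i) →
      -1 ≤ (affActInv v r (RS.simpleRoot i, 0)).2) ∧
    (∀ i, ¬ RS.IsShort (RS.simpleRoot i) →
      0 ≤ (affActInv v r (RS.simpleRoot i, 0)).2) ∧
    0 ≤ (affActInv v r (-RS.θ, 1)).2

/-- `w = v·t_r` is `s`-maximal: dominant, `k ≤ 1` for short simple `α`, and `k ≤ 0`
for `α ∈ Π̂_l = Π_l ∪ {α₀}`, where `w⁻¹(α) = kδ + μ`. -/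
def IsSMaximalPair (v : V ≃ₗ[ℝ] V) (r : V) : Prop :=
  RS.IsDominantPair v r ∧
    (∀ i, RS.IsShort (RS.simpleRoot i) →
      (affActInv v r (RS.simpleRoot i, 0)).2 ≤ 1) ∧
    (∀ i, ¬ RS.IsShort (RS.simpleRoot i) →
      (affActInv v r (RS.simpleRoot i, 0)).2 ≤ 0) ∧
    (affActInv v r (-RS.θ, 1)).2 ≤ 0

/-- The open fundamental Weyl chamber `C`. -/
def chamber : Set V := {x : V | ∀ i, 0 < ⟪x, RS.simpleRoot i⟫}

/-- The open fundamental alcove `A`. -/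
def alcove : Set V := {x : V | (∀ i, 0 < ⟪x, RS.simpleRoot i⟫) ∧ ⟪x, RS.θ⟫ < 1}

/-- The affine arrangement of all hyperplanes `{x | (x,μ) = k}`, `μ ∈ Δ⁺`, `k ∈ ℤ`,
whose regions are the alcoves. -/
def affineArrangement : Set (V × ℝ) :=
  {h : V × ℝ | h.1 ∈ RS.pos ∧ ∃ k : ℤ, h.2 = (k : ℝ)}

/-- The dominant region `R_I` of the Catalan (equivalently, Shi) arrangement attached
to an ideal `I ⊆ Δ⁺` under the Shi bijection. -/
def regionOfIdeal (I : Set V) : Set V :=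
  {x ∈ RS.chamber | (∀ γ ∈ I, 1 < ⟪x, γ⟫) ∧ ∀ γ ∈ RS.pos \ I, ⟪x, γ⟫ < 1}

/-- The semi-Catalan arrangement `Cat_s(Δ)`. -/
def semiCatalan : Set (V × ℝ) :=
  {h : V × ℝ | h.1 ∈ RS.shortPos ∧ (h.2 = -1 ∨ h.2 = 0 ∨ h.2 = 1)} ∪
    {h : V × ℝ | h.1 ∈ RS.longPos ∧ h.2 = 0}

/-- The `m`-semi-Catalan arrangement `Cat_s^m(Δ)`. -/
def semiCatalanM (m : ℕ) : Set (V × ℝ) :=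
  {h : V × ℝ | h.1 ∈ RS.shortPos ∧ ∃ k : ℤ, |k| ≤ (m : ℤ) ∧ h.2 = (k : ℝ)} ∪
    {h : V × ℝ | h.1 ∈ RS.longPos ∧ h.2 = 0}

/-- The region `R_Γ^(s)` of the semi-Catalan arrangement attached to a short
antichain `Γ`. -/
def sRegion (Γ : Set V) : Set V :=
  {x ∈ RS.chamber | (∀ μ ∈ RS.idealGen Γ ∩ RS.shortPos, 1 < ⟪x, μ⟫) ∧
    ∀ μ ∈ RS.shortPos \ RS.idealGen Γ, ⟪x, μ⟫ < 1}

/-- `α` has height `n` (sum of the coefficients over the simple roots). -/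
def heightIs (α : V) (n : ℕ) : Prop :=
  ∃ c : Fin p → ℕ, α = ∑ i, (c i : ℝ) • RS.simpleRoot i ∧ ∑ i, c i = n

/-- `e` enumerates the exponents `e₁, …, e_p` of the Weyl group `W`, characterized by the
Shapiro–Kostant–Steinberg property: for every `k ≥ 1`, the number of positive roots of
height `k` equals the number of exponents that are `≥ k`. -/
def IsExponents (e : Fin p → ℕ) : Prop :=
  ∀ k : ℕ, 1 ≤ k →
    {α ∈ RS.pos | RS.heightIs α k}.ncard = {i : Fin p | k ≤ e i}.ncard

/-- `h` is the Coxeter number of `W`, characterized by `#Δ = p·h`. -/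
def IsCoxeterNumber (h : ℕ) : Prop := RS.Δ.ncard = p * h

open Classical in
/-- `g` is the sum of the coefficients of the short simple roots in the expression
`θ = Σ cᵢ αᵢ` of the highest root. -/
def IsShortCoeffSum (g : ℕ) : Prop :=
  ∃ c : Fin p → ℕ, RS.θ = ∑ i, (c i : ℝ) • RS.simpleRoot i ∧
    (∑ i, if RS.IsShort (RS.simpleRoot i) then c i else 0) = g

open Classical in
/-- The number of constraints of the simplex
`D_max = {x | (x,αᵢ) ≤ 1 ∀i, (x,θ) ≥ 0}` that are active (hold with equality) at `x`;
for `x ∈ D_max` this is the codimension of the face of `D_max` containing `x`. -/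
noncomputable def dmaxFaceCodim (x : V) : ℕ :=
  {i : Fin p | ⟪x, RS.simpleRoot i⟫ = 1}.ncard + (if ⟪x, RS.θ⟫ = 0 then 1 else 0)

end RootSystemData


/-!
For `w = v·t_r`, a positive root `μ` lies outside `I^w` exactly when `w(δ - μ)` is a positive
affine root, and such affine roots lie in the first layer `Δ⁺ ∪ (δ - Δ⁺)`. The set `Ξ(I^w)`
consists exactly of the `μ` for which `w(δ - μ)` is an affine simple root, i.e. of one `μ` for
each `α ∈ Π̂` such that `w⁻¹(α)` has `δ`-coefficient (level) one. Maximality of `w` says that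
every `α ∈ Π̂` has level at most one, and the `α` of level one correspond to the constraints of
`D_max` that are active at `v(r)`.

That these `μ` are maximal is a comparison of heights. Conversely, if `w(δ - μ)` is not
simple, it is a sum of two first-layer roots one of which has level one: the level is
additive, integral and at most one on `Π̂`, so the level of a summand can be lowered step by
step, using the root analogue of the Jacobi identity (if `b + c` and `a + b + c` are roots, so
is `a + b` or `a + c`). The other summand is then `w(γ)` with `γ ∈ Δ⁺`, and `μ + γ` is a
larger element of `Δ⁺ \ I^w`.
-/

section AffineAction

variable {V : Type*} [NormedAddCommGroup V] [InnerProductSpace ℝ V] (v : V ≃ₗ[ℝ] V) (r : V)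

lemma affActInv_affAct (β : V × ℝ) : affActInv v r (affAct v r β) = β := by
  ext <;> simp [affAct, affActInv]

lemma affAct_affActInv (β : V × ℝ) : affAct v r (affActInv v r β) = β := by
  ext <;> simp [affAct, affActInv]

lemma affAct_add (a b : V × ℝ) : affAct v r (a + b) = affAct v r a + affAct v r b := by
  ext <;> simp [affAct, inner_add_left]
  ring

lemma affAct_neg (β : V × ℝ) : affAct v r (-β) = -affAct v r β := by
  ext <;> simp [affAct]
  ring

lemma affActInv_add (a b : V × ℝ) :
    affActInv v r (a + b) = affActInv v r a + affActInv v r b := by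
  ext <;> simp [affActInv, inner_add_left]
  ring

/-- The coefficient `k` of `δ` in `w⁻¹(β) = kδ + μ`, for `w = v·t_r`. -/
def affLevel : V × ℝ →+ ℝ where
  toFun β := (affActInv v r β).2
  map_zero' := by simp [affActInv]
  map_add' a b := by rw [affActInv_add, Prod.snd_add]

lemma affLevel_apply (β : V × ℝ) : affLevel v r β = (affActInv v r β).2 := rfl

end AffineAction

lemma exists_nat_eq_add_one {t : ℝ} (ht : ∃ m : ℤ, t = m) (h : 1 ≤ t) :
    ∃ n : ℕ, t = n + 1 := by
  obtain ⟨m, rfl⟩ := ht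
  have hm : (1 : ℤ) ≤ m := by exact_mod_cast h
  obtain ⟨n, hn⟩ := Int.eq_ofNat_of_zero_le (show 0 ≤ m - 1 by omega)
  exact ⟨n, by rw [show m = n + 1 by omega]; push_cast; ring⟩

open Classical in
lemma ncard_setOf_option {α : Type*} [Fintype α] (P : Option α → Prop) :
    {o | P o}.ncard = {a | P (some a)}.ncard + if P none then 1 else 0 := by
  simp only [Set.ncard_eq_toFinset_card', Set.toFinset_ofPred, Finset.card_filter,
    Fintype.sum_option]
  exact add_comm _ _

namespace RootSystemData

variable {V : Type*} [NormedAddCommGroup V] [InnerProductSpace ℝ V] {p : ℕ}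
  (RS : RootSystemData V p)

section Roots

def natCone : AddSubmonoid V := AddSubmonoid.closure (Set.range RS.simpleRoot)

lemma mem_natCone_iff {x : V} :
    x ∈ RS.natCone ↔ ∃ c : Fin p → ℕ, x = ∑ i, (c i : ℝ) • RS.simpleRoot i := by
  simp only [natCone, AddSubmonoid.mem_closure_range_iff_of_fintype, Nat.cast_smul_eq_nsmul]

lemma simpleRoot_mem_natCone (i : Fin p) : RS.simpleRoot i ∈ RS.natCone :=
  AddSubmonoid.subset_closure ⟨i, rfl⟩

lemma mem_pos_iff {α : V} : α ∈ RS.pos ↔ α ∈ RS.Δ ∧ α ∈ RS.natCone := by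
  rw [RS.pos_def, mem_natCone_iff]
  rfl

lemma rootLe_iff {μ γ : V} : RS.rootLe μ γ ↔ γ - μ ∈ RS.natCone := by
  simp only [rootLe, mem_natCone_iff, sub_eq_iff_eq_add']

lemma mem_of_mem_pos {α : V} (hα : α ∈ RS.pos) : α ∈ RS.Δ := (RS.mem_pos_iff.1 hα).1

lemma mem_natCone_of_mem_pos {α : V} (hα : α ∈ RS.pos) : α ∈ RS.natCone :=
  (RS.mem_pos_iff.1 hα).2

lemma simpleRoot_mem_pos (i : Fin p) : RS.simpleRoot i ∈ RS.pos :=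
  RS.mem_pos_iff.2 ⟨RS.simpleRoot_mem i, RS.simpleRoot_mem_natCone i⟩

lemma add_mem_pos {α β : V} (hα : α ∈ RS.pos) (hβ : β ∈ RS.pos) (h : α + β ∈ RS.Δ) :
    α + β ∈ RS.pos :=
  RS.mem_pos_iff.2 ⟨h, add_mem (RS.mem_natCone_of_mem_pos hα) (RS.mem_natCone_of_mem_pos hβ)⟩

lemma span_range_simpleRoot : Submodule.span ℝ (Set.range RS.simpleRoot) = ⊤ := by
  have hcone : (RS.natCone : Set V) ⊆ Submodule.span ℝ (Set.range RS.simpleRoot) :=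
    AddSubmonoid.closure_le (S := (Submodule.span ℝ _).toAddSubmonoid).2 Submodule.subset_span
  rw [eq_top_iff, ← RS.span_eq_top, Submodule.span_le]
  intro α hα
  rcases RS.pos_or_neg α hα with h | h
  · exact hcone (RS.mem_natCone_of_mem_pos h)
  · simpa using Submodule.neg_mem _ (hcone (RS.mem_natCone_of_mem_pos h))

noncomputable def simpleBasis : Basis (Fin p) ℝ V :=
  Basis.mk RS.simpleRoot_indep RS.span_range_simpleRoot.ge

noncomputable def ht : V →ₗ[ℝ] ℝ := RS.simpleBasis.sumCoords

lemma ht_simpleRoot (i : Fin p) : RS.ht (RS.simpleRoot i) = 1 := by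
  rw [ht, ← show RS.simpleBasis i = RS.simpleRoot i from Basis.mk_apply _ _ _,
    Basis.sumCoords_self_apply]

lemma eq_zero_or_one_le_ht {x : V} (hx : x ∈ RS.natCone) : x = 0 ∨ 1 ≤ RS.ht x := by
  induction hx using AddSubmonoid.closure_induction with
  | mem _ h =>
    obtain ⟨i, rfl⟩ := h
    exact Or.inr (RS.ht_simpleRoot i).ge
  | zero => exact Or.inl rfl
  | add a b _ _ ha hb =>
    rcases ha with rfl | ha
    · simpa using hb
    rcases hb with rfl | hb
    · simpa using Or.inr ha
    exact Or.inr (by rw [map_add]; linarith)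

lemma ht_nonneg {x : V} (hx : x ∈ RS.natCone) : 0 ≤ RS.ht x := by
  rcases RS.eq_zero_or_one_le_ht hx with rfl | h
  · simp
  · linarith

lemma ne_zero_of_mem {α : V} (hα : α ∈ RS.Δ) : α ≠ 0 := by
  rintro rfl
  exact RS.zero_notMem hα

lemma one_le_ht {α : V} (hα : α ∈ RS.pos) : 1 ≤ RS.ht α :=
  (RS.eq_zero_or_one_le_ht (RS.mem_natCone_of_mem_pos hα)).resolve_left
    (RS.ne_zero_of_mem (RS.mem_of_mem_pos hα))

lemma neg_notMem_pos {α : V} (hα : α ∈ RS.pos) : -α ∉ RS.pos := fun h => by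
  have := RS.one_le_ht h
  rw [map_neg] at this
  linarith [RS.one_le_ht hα]

lemma add_ne_zero_of_mem_pos {α β : V} (hα : α ∈ RS.pos) (hβ : β ∈ RS.pos) : α + β ≠ 0 :=
  fun h => RS.neg_notMem_pos hα (by rwa [← eq_neg_of_add_eq_zero_right h])

lemma ht_le_ht_θ {α : V} (hα : α ∈ RS.pos) : RS.ht α ≤ RS.ht RS.θ := by
  have h := RS.ht_nonneg (RS.rootLe_iff.1 (RS.θ_highest α hα))
  rw [map_sub] at h
  linarith

lemma neg_ht_θ_le_ht {α : V} (hα : α ∈ RS.Δ) : -RS.ht RS.θ ≤ RS.ht α := by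
  rcases RS.pos_or_neg α hα with h | h
  · linarith [RS.one_le_ht h, RS.one_le_ht RS.θ_mem]
  · have := RS.ht_le_ht_θ h
    rw [map_neg] at this
    linarith

lemma exists_inner_simpleRoot_pos {x z : V} (hx : x ∈ RS.natCone) (h : 0 < ⟪z, x⟫) :
    ∃ i, 0 < ⟪z, RS.simpleRoot i⟫ := by
  induction hx using AddSubmonoid.closure_induction with
  | mem _ hy =>
    obtain ⟨i, rfl⟩ := hy
    exact ⟨i, h⟩
  | zero => simp at h
  | add a b _ _ ha hb =>
    rw [inner_add_right] at h
    by_cases h' : 0 < ⟪z, a⟫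
    exacts [ha h', hb (by linarith)]

lemma inner_self_pos {α : V} (hα : α ∈ RS.Δ) : 0 < ⟪α, α⟫ :=
  real_inner_self_pos.2 (RS.ne_zero_of_mem hα)

lemma sRefl_apply (α x : V) : sRefl α x = x - (2 * ⟪α, x⟫ / ⟪α, α⟫) • α := rfl

lemma cartan_eq_one {α β : V} (hα : α ∈ RS.Δ) (hβ : β ∈ RS.Δ) (h0 : 0 < ⟪α, β⟫)
    (h1 : ⟪α, β⟫ < ⟪α, α⟫) : 2 * ⟪α, β⟫ / ⟪α, α⟫ = 1 := by
  obtain ⟨n, hn⟩ := RS.crystallographic α hα β hβ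
  have hαα := RS.inner_self_pos hα
  have hlo : (0 : ℝ) < n := by rw [← hn]; positivity
  have hhi : (n : ℝ) < 2 := by rw [← hn, div_lt_iff₀ hαα]; linarith
  have : n = 1 := by
    have := Int.cast_pos.1 hlo
    have : n < 2 := by exact_mod_cast hhi
    omega
  rw [hn, this, Int.cast_one]

lemma sub_mem_of_inner_pos {β γ : V} (hβ : β ∈ RS.Δ) (hγ : γ ∈ RS.Δ) (h : 0 < ⟪β, γ⟫)
    (hne : β ≠ γ) : β - γ ∈ RS.Δ := by
  by_cases hγγ : ⟪β, γ⟫ < ⟪γ, γ⟫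
  · have := RS.reflect_mem γ hγ β hβ
    rwa [sRefl_apply,
      RS.cartan_eq_one hγ hβ (by rwa [real_inner_comm]) (by rwa [real_inner_comm]),
      one_smul] at this
  by_cases hββ : ⟪β, γ⟫ < ⟪β, β⟫
  · have := RS.neg_mem _ (RS.reflect_mem β hβ γ hγ)
    rwa [sRefl_apply, RS.cartan_eq_one hβ hγ h hββ, one_smul, neg_sub] at this
  -- both Cartan integers are now at least 2, which forces `‖β - γ‖² ≤ 0`
  refine absurd (sub_eq_zero.1 (real_inner_self_nonpos.1 ?_)) hne
  rw [inner_sub_left, inner_sub_right, inner_sub_right, real_inner_comm β γ]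
  linarith

lemma add_mem_of_inner_neg {β γ : V} (hβ : β ∈ RS.Δ) (hγ : γ ∈ RS.Δ) (h : ⟪β, γ⟫ < 0)
    (hne : β + γ ≠ 0) : β + γ ∈ RS.Δ := by
  have := RS.sub_mem_of_inner_pos hβ (RS.neg_mem γ hγ) (by rwa [inner_neg_right, neg_pos])
    (fun h' => hne (by rw [h', neg_add_cancel]))
  rwa [sub_neg_eq_add] at this

/-- The root-theoretic shadow of the Jacobi identity
`[a, [b, c]] = [[a, b], c] + [b, [a, c]]`. -/
lemma add_mem_or_add_mem {a b c : V} (ha : a ∈ RS.Δ) (hb : b ∈ RS.Δ) (hc : c ∈ RS.Δ)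
    (hbc : b + c ∈ RS.Δ) (habc : a + (b + c) ∈ RS.Δ) (hab : a + b ≠ 0) (hac : a + c ≠ 0) :
    a + b ∈ RS.Δ ∨ a + c ∈ RS.Δ := by
  by_contra hcon
  rw [not_or] at hcon
  have h₁ : 0 ≤ ⟪a, b⟫ := not_lt.1 fun h => hcon.1 (RS.add_mem_of_inner_neg ha hb h hab)
  have h₂ : 0 ≤ ⟪a, c⟫ := not_lt.1 fun h => hcon.2 (RS.add_mem_of_inner_neg ha hc h hac)
  have h₃ : ⟪a + (b + c), b⟫ ≤ 0 := not_lt.1 fun h => hcon.2 (by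
    have := RS.sub_mem_of_inner_pos habc hb h fun h' => hac (by
      rw [show a + c = a + (b + c) - b by abel, h', sub_self])
    rwa [show a + (b + c) - b = a + c by abel] at this)
  have h₄ : ⟪a + (b + c), c⟫ ≤ 0 := not_lt.1 fun h => hcon.1 (by
    have := RS.sub_mem_of_inner_pos habc hc h fun h' => hab (by
      rw [show a + b = a + (b + c) - c by abel, h', sub_self])
    rwa [show a + (b + c) - c = a + b by abel] at this)
  have hs := RS.inner_self_pos hbc
  simp only [inner_add_left, inner_add_right] at h₃ h₄ hs
  rw [real_inner_comm b c] at h₃ hs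
  linarith

lemma exists_sub_simpleRoot_mem_pos {ρ : V} (hρ : ρ ∈ RS.pos)
    (hns : ρ ∉ Set.range RS.simpleRoot) : ∃ i, ρ - RS.simpleRoot i ∈ RS.pos := by
  have hρΔ := RS.mem_of_mem_pos hρ
  obtain ⟨i, hi⟩ :=
    RS.exists_inner_simpleRoot_pos (RS.mem_natCone_of_mem_pos hρ) (RS.inner_self_pos hρΔ)
  have hsub := RS.sub_mem_of_inner_pos hρΔ (RS.simpleRoot_mem i) hi fun h => hns ⟨i, h.symm⟩
  refine ⟨i, (RS.pos_or_neg _ hsub).resolve_right fun h => ?_⟩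
  have h₁ := RS.one_le_ht h
  rw [neg_sub, map_sub, RS.ht_simpleRoot] at h₁
  linarith [RS.one_le_ht hρ]

lemma exists_add_mem_of_ne_θ {ρ : V} (hρ : ρ ∈ RS.pos) (hne : ρ ≠ RS.θ) :
    ∃ κ ∈ RS.pos, ρ + κ ∈ RS.Δ := by
  have hρΔ := RS.mem_of_mem_pos hρ
  have hd := RS.rootLe_iff.1 (RS.θ_highest ρ hρ)
  by_cases h : 0 < ⟪RS.θ, ρ⟫
  · have hsub := RS.sub_mem_of_inner_pos (RS.mem_of_mem_pos RS.θ_mem) hρΔ h hne.symm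
    exact ⟨RS.θ - ρ, RS.mem_pos_iff.2 ⟨hsub, hd⟩,
      by rw [add_sub_cancel]; exact RS.mem_of_mem_pos RS.θ_mem⟩
  · obtain ⟨i, hi⟩ := RS.exists_inner_simpleRoot_pos hd (z := -ρ) (by
      rw [inner_neg_left, inner_sub_right, real_inner_comm RS.θ ρ]
      linarith [RS.inner_self_pos hρΔ])
    rw [inner_neg_left, neg_pos] at hi
    exact ⟨RS.simpleRoot i, RS.simpleRoot_mem_pos i, RS.add_mem_of_inner_neg hρΔ
      (RS.simpleRoot_mem i) hi (RS.add_ne_zero_of_mem_pos hρ (RS.simpleRoot_mem_pos i))⟩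

lemma inner_sRefl_sRefl (α x y : V) : ⟪sRefl α x, sRefl α y⟫ = ⟪x, y⟫ := by
  by_cases h : α = 0
  · simp [sRefl_apply, h]
  · have hα : ⟪α, α⟫ ≠ 0 := inner_self_ne_zero.mpr h
    simp only [sRefl_apply, inner_sub_left, inner_sub_right, real_inner_smul_left,
      real_inner_smul_right, real_inner_comm x α]
    field_simp
    ring

lemma isometry_and_mapsTo_of_mem_weylGroup {v : V ≃ₗ[ℝ] V} (hv : v ∈ RS.weylGroup) :
    (∀ x y, ⟪v x, v y⟫ = ⟪x, y⟫) ∧ ∀ β ∈ RS.Δ, v β ∈ RS.Δ := by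
  induction hv using Subgroup.closure_induction'' with
  | mem w hw =>
    obtain ⟨α, hα, rfl⟩ := hw
    exact ⟨inner_sRefl_sRefl α, RS.reflect_mem α hα⟩
  | inv_mem w hw =>
    obtain ⟨α, hα, rfl⟩ := hw
    exact ⟨inner_sRefl_sRefl α, RS.reflect_mem α hα⟩
  | one => exact ⟨fun _ _ => rfl, fun _ h => h⟩
  | mul v w _ _ hv hw =>
    exact ⟨fun x y => (hv.1 _ _).trans (hw.1 x y), fun β hβ => hv.2 _ (hw.2 β hβ)⟩

lemma symm_apply_mem {v : V ≃ₗ[ℝ] V} (hv : v ∈ RS.weylGroup) {β : V} (hβ : β ∈ RS.Δ) :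
    v.symm β ∈ RS.Δ :=
  (RS.isometry_and_mapsTo_of_mem_weylGroup (inv_mem hv)).2 β hβ

lemma inner_symm_apply {v : V ≃ₗ[ℝ] V} (hv : v ∈ RS.weylGroup) (x y : V) :
    ⟪v.symm x, y⟫ = ⟪x, v y⟫ := by
  rw [← (RS.isometry_and_mapsTo_of_mem_weylGroup hv).1, LinearEquiv.apply_symm_apply]

lemma exists_int_inner_eq {r : V} (hr : r ∈ RS.corootLattice) {β : V} (hβ : β ∈ RS.Δ) :
    ∃ n : ℤ, ⟪β, r⟫ = n := by
  induction hr using AddSubgroup.closure_induction with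
  | mem _ h =>
    obtain ⟨α, hα, rfl⟩ := h
    obtain ⟨n, hn⟩ := RS.crystallographic α hα β hβ
    refine ⟨n, ?_⟩
    rw [corootVec, real_inner_smul_right, real_inner_comm α β, ← hn]
    ring
  | zero => exact ⟨0, by simp⟩
  | add _ _ _ _ ha hb =>
    obtain ⟨m, hm⟩ := ha
    obtain ⟨n, hn⟩ := hb
    exact ⟨m + n, by rw [inner_add_right, hm, hn, Int.cast_add]⟩
  | neg _ _ ha =>
    obtain ⟨n, hn⟩ := ha
    exact ⟨-n, by rw [inner_neg_right, hn, Int.cast_neg]⟩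

end Roots

section AffineRoots

def affSimpleRoot : Option (Fin p) → V × ℝ
  | none => (-RS.θ, 1)
  | some i => (RS.simpleRoot i, 0)

noncomputable def affHt : V × ℝ →ₗ[ℝ] ℝ :=
  RS.ht ∘ₗ LinearMap.fst ℝ V ℝ + (RS.ht RS.θ + 1) • LinearMap.snd ℝ V ℝ

lemma affHt_apply (β : V × ℝ) : RS.affHt β = RS.ht β.1 + (RS.ht RS.θ + 1) * β.2 := rfl

lemma affSimpleRoot_injective : Function.Injective RS.affSimpleRoot := by
  rintro (_ | i) (_ | j) h <;> simp [affSimpleRoot] at h ⊢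
  exact RS.simpleRoot_indep.injective h

lemma affHt_affSimpleRoot (o : Option (Fin p)) : RS.affHt (RS.affSimpleRoot o) = 1 := by
  cases o <;> simp [affSimpleRoot, affHt_apply, ht_simpleRoot]

lemma snd_nonneg_of_mem_affPos {β : V × ℝ} (hβ : β ∈ RS.affPos) : 0 ≤ β.2 := by
  rcases hβ.2 with h | h
  exacts [h.le, h.1.ge]

lemma add_mem_affPos {a b : V × ℝ} (ha : a ∈ RS.affPos) (hb : b ∈ RS.affPos)
    (h : a.1 + b.1 ∈ RS.Δ) : a + b ∈ RS.affPos := by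
  refine ⟨h, ?_⟩
  rcases ha.2 with ha' | ⟨ha0, ha'⟩
  · exact Or.inl (by simpa using add_pos_of_pos_of_nonneg ha' (RS.snd_nonneg_of_mem_affPos hb))
  rcases hb.2 with hb' | ⟨hb0, hb'⟩
  · exact Or.inl (by simpa [ha0] using hb')
  · exact Or.inr ⟨by simp [ha0, hb0], RS.add_mem_pos ha' hb' h⟩

lemma neg_notMem_affPos {β : V × ℝ} (hβ : β ∈ RS.affPos) : -β ∉ RS.affPos := fun h => by
  have h₁ := RS.snd_nonneg_of_mem_affPos h
  rcases hβ.2 with h₂ | ⟨h₂, hpos⟩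
  · simp only [Prod.snd_neg] at h₁
    linarith
  · rcases h.2 with h₃ | ⟨-, hneg⟩
    · simp [h₂] at h₃
    · exact RS.neg_notMem_pos hpos hneg

lemma mem_affPos_or_neg_mem {β : V × ℝ} (hβ : β.1 ∈ RS.Δ) : β ∈ RS.affPos ∨ -β ∈ RS.affPos := by
  rcases lt_trichotomy β.2 0 with h | h | h
  · exact Or.inr ⟨by simpa using RS.neg_mem _ hβ, Or.inl (by simpa using h)⟩
  · rcases RS.pos_or_neg _ hβ with h' | h'
    · exact Or.inl ⟨hβ, Or.inr ⟨h, h'⟩⟩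
    · exact Or.inr ⟨by simpa using RS.neg_mem _ hβ, Or.inr ⟨by simp [h], h'⟩⟩
  · exact Or.inl ⟨hβ, Or.inl h⟩

lemma one_le_affHt {β : V × ℝ} (hβ : β ∈ RS.affPos) (hint : ∃ n : ℤ, β.2 = n) :
    1 ≤ RS.affHt β := by
  rw [affHt_apply]
  rcases hβ with ⟨hΔ, hk | ⟨hk, hpos⟩⟩
  · obtain ⟨n, hn⟩ := hint
    have : (1 : ℝ) ≤ β.2 := by
      rw [hn] at hk ⊢
      exact_mod_cast Int.cast_pos.1 hk
    nlinarith [RS.neg_ht_θ_le_ht hΔ, RS.one_le_ht RS.θ_mem]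
  · rw [hk, mul_zero, add_zero]
    exact RS.one_le_ht hpos

def firstLayer : Set (V × ℝ) := (fun γ => (γ, 0)) '' RS.pos ∪ (fun γ => (-γ, 1)) '' RS.pos

lemma mem_firstLayer_iff {β : V × ℝ} :
    β ∈ RS.firstLayer ↔ β ∈ RS.affPos ∧ (0, 1) - β ∈ RS.affPos ∧ (β.2 = 0 ∨ β.2 = 1) := by
  constructor
  · rintro (⟨γ, hγ, rfl⟩ | ⟨γ, hγ, rfl⟩)
    · refine ⟨⟨RS.mem_of_mem_pos hγ, Or.inr ⟨rfl, hγ⟩⟩, ?_, Or.inl rfl⟩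
      exact ⟨by simpa using RS.neg_mem _ (RS.mem_of_mem_pos hγ), Or.inl (by simp)⟩
    · refine ⟨⟨RS.neg_mem _ (RS.mem_of_mem_pos hγ), Or.inl one_pos⟩, ?_, Or.inr rfl⟩
      exact ⟨by simpa using RS.mem_of_mem_pos hγ, Or.inr ⟨by simp, by simpa using hγ⟩⟩
  · rintro ⟨hβ, hδβ, hk | hk⟩
    · rcases hβ.2 with h | ⟨-, h⟩
      · simp [hk] at h
      · exact Or.inl ⟨β.1, h, Prod.ext rfl hk.symm⟩
    · rcases hδβ.2 with h | ⟨-, h⟩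
      · simp [hk] at h
      · exact Or.inr ⟨-β.1, by simpa using h, Prod.ext (neg_neg _) hk.symm⟩

lemma mem_affPos_of_mem_firstLayer {β : V × ℝ} (hβ : β ∈ RS.firstLayer) : β ∈ RS.affPos :=
  (RS.mem_firstLayer_iff.1 hβ).1

lemma affHt_mem_Icc_of_mem_firstLayer {β : V × ℝ} (hβ : β ∈ RS.firstLayer) :
    RS.affHt β ∈ Set.Icc 1 (RS.ht RS.θ) := by
  rcases hβ with ⟨γ, hγ, rfl⟩ | ⟨γ, hγ, rfl⟩ <;>
    simp only [Set.mem_Icc, affHt_apply, map_neg] <;>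
    constructor <;> linarith [RS.one_le_ht hγ, RS.ht_le_ht_θ hγ]

lemma affSimpleRoot_mem_firstLayer (o : Option (Fin p)) :
    RS.affSimpleRoot o ∈ RS.firstLayer := by
  cases o with
  | none => exact Or.inr ⟨RS.θ, RS.θ_mem, rfl⟩
  | some i => exact Or.inl ⟨RS.simpleRoot i, RS.simpleRoot_mem_pos i, rfl⟩

lemma affSimpleRoot_sub_δ_notMem_affPos (o : Option (Fin p)) :
    RS.affSimpleRoot o - (0, 1) ∉ RS.affPos := by
  cases o with
  | none =>
    rintro ⟨-, h | ⟨-, h⟩⟩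
    · simp [affSimpleRoot] at h
    · exact RS.neg_notMem_pos RS.θ_mem (by simpa [affSimpleRoot] using h)
  | some i =>
    intro h
    have := RS.snd_nonneg_of_mem_affPos h
    norm_num [affSimpleRoot] at this

lemma add_mem_firstLayer {a b c : V × ℝ} (ha : a ∈ RS.firstLayer) (hb : b ∈ RS.firstLayer)
    (hc : c ∈ RS.firstLayer) (habc : a + b + c ∈ RS.firstLayer) (h : a.1 + b.1 ∈ RS.Δ) :
    a + b ∈ RS.firstLayer := by
  rw [mem_firstLayer_iff] at ha hb hc habc ⊢
  have hδab : (0, 1) - (a + b) ∈ RS.affPos := by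
    rw [show (0, 1) - (a + b) = ((0, 1) - (a + b + c)) + c by abel]
    refine RS.add_mem_affPos habc.2.1 hc.1 ?_
    show (0 : V) - (a.1 + b.1 + c.1) + c.1 ∈ RS.Δ
    rw [show (0 : V) - (a.1 + b.1 + c.1) + c.1 = -(a.1 + b.1) by abel]
    exact RS.neg_mem _ h
  refine ⟨RS.add_mem_affPos ha.1 hb.1 h, hδab, ?_⟩
  have := RS.snd_nonneg_of_mem_affPos hδab
  simp only [Prod.snd_sub, Prod.snd_add] at this ⊢
  rcases ha.2.2 with h₁ | h₁ <;> rcases hb.2.2 with h₂ | h₂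
  · exact Or.inl (by rw [h₁, h₂, add_zero])
  · exact Or.inr (by rw [h₁, h₂, zero_add])
  · exact Or.inr (by rw [h₁, h₂, add_zero])
  · rw [h₁, h₂] at this
    norm_num at this

lemma fst_add_ne_zero {a b c : V × ℝ} (ha : a ∈ RS.firstLayer) (hb : b ∈ RS.firstLayer)
    (hc : c ∈ RS.firstLayer) (habc : a + b + c ∈ RS.firstLayer) : a.1 + b.1 ≠ 0 := by
  intro h0
  have hab : RS.affHt a + RS.affHt b = (RS.ht RS.θ + 1) * (a.2 + b.2) := by
    rw [← map_add, affHt_apply, Prod.fst_add, h0, map_zero, zero_add, Prod.snd_add]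
  have habc' := (RS.affHt_mem_Icc_of_mem_firstLayer habc).2
  rw [map_add, map_add] at habc'
  have ha' := (RS.affHt_mem_Icc_of_mem_firstLayer ha).1
  have hb' := (RS.affHt_mem_Icc_of_mem_firstLayer hb).1
  have hc' := (RS.affHt_mem_Icc_of_mem_firstLayer hc).1
  rcases (RS.mem_firstLayer_iff.1 ha).2.2 with h₁ | h₁ <;>
    rcases (RS.mem_firstLayer_iff.1 hb).2.2 with h₂ | h₂ <;>
    rw [h₁, h₂] at hab <;> linarith

lemma add_mem_firstLayer_or {a₁ a₂ b : V × ℝ} (ha₁ : a₁ ∈ RS.firstLayer)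
    (ha₂ : a₂ ∈ RS.firstLayer) (hb : b ∈ RS.firstLayer) (ha : a₁ + a₂ ∈ RS.firstLayer)
    (hβ : a₁ + a₂ + b ∈ RS.firstLayer) : a₁ + b ∈ RS.firstLayer ∨ a₂ + b ∈ RS.firstLayer := by
  have fst_mem {β : V × ℝ} (h : β ∈ RS.firstLayer) : β.1 ∈ RS.Δ :=
    (RS.mem_affPos_of_mem_firstLayer h).1
  have h₁ : b + a₁ + a₂ ∈ RS.firstLayer := by rwa [show b + a₁ + a₂ = a₁ + a₂ + b by abel]
  have h₂ : b + a₂ + a₁ ∈ RS.firstLayer := by rwa [show b + a₂ + a₁ = a₁ + a₂ + b by abel]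
  rcases RS.add_mem_or_add_mem (fst_mem hb) (fst_mem ha₁) (fst_mem ha₂) (fst_mem ha)
    (by simpa [add_comm] using fst_mem hβ) (RS.fst_add_ne_zero hb ha₁ ha₂ h₁)
    (RS.fst_add_ne_zero hb ha₂ ha₁ h₂) with h | h
  · refine Or.inl (RS.add_mem_firstLayer ha₁ hb ha₂ ?_ (by rwa [add_comm]))
    rwa [show a₁ + b + a₂ = a₁ + a₂ + b by abel]
  · exact Or.inr (RS.add_mem_firstLayer ha₂ hb ha₁
      (by rwa [show a₂ + b + a₁ = a₁ + a₂ + b by abel]) (by rwa [add_comm]))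

lemma exists_add_eq_of_notMem_range {β : V × ℝ} (hβ : β ∈ RS.firstLayer)
    (hs : β ∉ Set.range RS.affSimpleRoot) :
    ∃ a ∈ RS.firstLayer, ∃ b ∈ RS.firstLayer, a + b = β := by
  rcases hβ with ⟨γ, hγ, rfl⟩ | ⟨ρ, hρ, rfl⟩
  · obtain ⟨i, hi⟩ := RS.exists_sub_simpleRoot_mem_pos hγ fun ⟨i, hi⟩ =>
      hs ⟨some i, by simp [affSimpleRoot, hi]⟩
    exact ⟨_, Or.inl ⟨_, RS.simpleRoot_mem_pos i, rfl⟩, _, Or.inl ⟨_, hi, rfl⟩, by simp⟩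
  · obtain ⟨κ, hκ, hρκ⟩ := RS.exists_add_mem_of_ne_θ hρ fun h =>
      hs ⟨none, by simp [affSimpleRoot, h]⟩
    exact ⟨_, Or.inl ⟨_, hκ, rfl⟩, _, Or.inr ⟨_, RS.add_mem_pos hρ hκ hρκ, rfl⟩,
      by ext <;> simp⟩

section Splitting

variable (ℓ : V × ℝ →+ ℝ)

def SplitsAtLevelOne (β : V × ℝ) : Prop :=
  ∃ a ∈ RS.firstLayer, ∃ b ∈ RS.firstLayer, a + b = β ∧ ℓ a = 1

variable {RS ℓ}

/-- The level of one summand of `β = a + b` can be lowered one step at a time: split `a`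
at level one as `a₁ + a₂` and regroup `b` with `a₁` or with `a₂`. -/
lemma splitsAtLevelOne_of_add_eq (hsimple : ∀ o, ℓ (RS.affSimpleRoot o) ≤ 1)
    {β : V × ℝ} (hβ : β ∈ RS.firstLayer)
    (ih : ∀ γ ∈ RS.firstLayer, RS.affHt γ ≤ RS.affHt β - 1 → 1 ≤ ℓ γ →
      γ ∉ Set.range RS.affSimpleRoot → RS.SplitsAtLevelOne ℓ γ) (n : ℕ) :
    ∀ a ∈ RS.firstLayer, ∀ b ∈ RS.firstLayer, a + b = β → ℓ a = n + 1 →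
      RS.SplitsAtLevelOne ℓ β := by
  induction n with
  | zero => exact fun a ha b hb hab h => ⟨a, ha, b, hb, hab, by simpa using h⟩
  | succ n ihn =>
    intro a ha b hb hab hℓa
    have hsa : a ∉ Set.range RS.affSimpleRoot := by
      rintro ⟨o, rfl⟩
      have := hsimple o
      push_cast at hℓa
      linarith
    have hht : RS.affHt a ≤ RS.affHt β - 1 := by
      rw [← hab, map_add]
      linarith [(RS.affHt_mem_Icc_of_mem_firstLayer hb).1]
    obtain ⟨a₁, ha₁, a₂, ha₂, rfl, hℓ₁⟩ := ih a ha hht (by push_cast at hℓa; linarith) hsa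
    rcases RS.add_mem_firstLayer_or ha₁ ha₂ hb ha (hab ▸ hβ) with h | h
    · refine ihn a₂ ha₂ (a₁ + b) h (by rw [← hab]; abel) ?_
      rw [map_add, hℓ₁] at hℓa
      push_cast at hℓa ⊢
      linarith
    · exact ⟨a₁, ha₁, a₂ + b, h, by rw [← hab]; abel, hℓ₁⟩

theorem splitsAtLevelOne (hint : ∀ β ∈ RS.firstLayer, ∃ n : ℤ, ℓ β = n)
    (hsimple : ∀ o, ℓ (RS.affSimpleRoot o) ≤ 1) {β : V × ℝ} (hβ : β ∈ RS.firstLayer) (hℓ : 1 ≤ ℓ β)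
    (hs : β ∉ Set.range RS.affSimpleRoot) : RS.SplitsAtLevelOne ℓ β := by
  suffices ∀ N : ℕ, ∀ β ∈ RS.firstLayer, RS.affHt β ≤ N → 1 ≤ ℓ β →
      β ∉ Set.range RS.affSimpleRoot → RS.SplitsAtLevelOne ℓ β from
    this _ β hβ (Nat.le_ceil _) hℓ hs
  intro N
  induction N with
  | zero =>
    intro β hβ hN
    push_cast at hN
    linarith [(RS.affHt_mem_Icc_of_mem_firstLayer hβ).1]
  | succ N ih =>
    intro β hβ hN hℓ hs
    have ih' : ∀ γ ∈ RS.firstLayer, RS.affHt γ ≤ RS.affHt β - 1 → 1 ≤ ℓ γ →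
        γ ∉ Set.range RS.affSimpleRoot → RS.SplitsAtLevelOne ℓ γ :=
      fun γ hγ hht => ih γ hγ (by push_cast at hN; linarith)
    obtain ⟨a, ha, b, hb, hab⟩ := RS.exists_add_eq_of_notMem_range hβ hs
    have hab₁ : 1 ≤ ℓ a ∨ 1 ≤ ℓ b := by
      obtain ⟨m, hm⟩ := hint a ha
      obtain ⟨m', hm'⟩ := hint b hb
      have : (1 : ℝ) ≤ m + m' := by rw [← hm, ← hm', ← map_add, hab]; exact hℓ
      have : (1 : ℤ) ≤ m + m' := by exact_mod_cast this
      rw [hm, hm']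
      rcases le_or_gt 1 m with h | h
      · exact Or.inl (by exact_mod_cast h)
      · exact Or.inr (by exact_mod_cast (show 1 ≤ m' by omega))
    rcases hab₁ with h | h
    · obtain ⟨n, hn⟩ := exists_nat_eq_add_one (hint a ha) h
      exact splitsAtLevelOne_of_add_eq hsimple hβ ih' n a ha b hb hab hn
    · obtain ⟨n, hn⟩ := exists_nat_eq_add_one (hint b hb) h
      exact splitsAtLevelOne_of_add_eq hsimple hβ ih' n b hb a ha (by rw [add_comm, hab]) hn

end Splitting

end AffineRoots

variable {RS} {v : V ≃ₗ[ℝ] V} {r : V}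

section Dominant

variable (hw : RS.IsDominantPair v r)
include hw

lemma inner_neg_or_map_mem_natCone {y : V} (hy : y ∈ RS.natCone) :
    ⟪y, r⟫ < 0 ∨ (⟪y, r⟫ = 0 ∧ v y ∈ RS.natCone) := by
  induction hy using AddSubmonoid.closure_induction with
  | mem _ h =>
    obtain ⟨i, rfl⟩ := h
    rcases (hw.2.2 i).2 with h | ⟨h, hpos⟩
    · exact Or.inl (by simpa [affAct] using h)
    · exact Or.inr ⟨by simpa [affAct] using h, RS.mem_natCone_of_mem_pos hpos⟩
  | zero => exact Or.inr ⟨inner_zero_left _, by simp [zero_mem]⟩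
  | add a b _ _ ha hb =>
    rw [inner_add_left, map_add]
    rcases ha with ha | ⟨ha, ha'⟩ <;> rcases hb with hb | ⟨hb, hb'⟩
    · exact Or.inl (by linarith)
    · exact Or.inl (by linarith)
    · exact Or.inl (by linarith)
    · exact Or.inr ⟨by linarith, add_mem ha' hb'⟩

lemma affAct_mem_affPos {γ : V} (hγ : γ ∈ RS.pos) : affAct v r (γ, 0) ∈ RS.affPos := by
  have hvγ := (RS.isometry_and_mapsTo_of_mem_weylGroup hw.1).2 γ (RS.mem_of_mem_pos hγ)
  refine ⟨hvγ, ?_⟩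
  simp only [affAct, zero_sub]
  rcases inner_neg_or_map_mem_natCone hw (RS.mem_natCone_of_mem_pos hγ) with h | ⟨h, h'⟩
  · exact Or.inl (by linarith)
  · exact Or.inr ⟨by simp [h], RS.mem_pos_iff.2 ⟨hvγ, h'⟩⟩

lemma ht_le_affHt_affAct {y : V} (hy : y ∈ RS.natCone) :
    RS.ht y ≤ RS.affHt (affAct v r (y, 0)) := by
  induction hy using AddSubmonoid.closure_induction with
  | mem _ h =>
    obtain ⟨i, rfl⟩ := h
    obtain ⟨n, hn⟩ := RS.exists_int_inner_eq hw.2.1 (RS.simpleRoot_mem i)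
    rw [RS.ht_simpleRoot]
    exact RS.one_le_affHt (hw.2.2 i) ⟨-n, by simp [affAct, hn]⟩
  | zero => simp [affAct, affHt_apply]
  | add a b _ _ ha hb =>
    rw [show ((a + b, 0) : V × ℝ) = (a, 0) + (b, 0) by simp, affAct_add, map_add, map_add]
    linarith

lemma affLevel_int {β : V × ℝ} (hβ : β ∈ RS.firstLayer) : ∃ n : ℤ, affLevel v r β = n := by
  obtain ⟨n, hn⟩ := RS.exists_int_inner_eq hw.2.1
    (RS.symm_apply_mem hw.1 (RS.mem_affPos_of_mem_firstLayer hβ).1)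
  rcases (RS.mem_firstLayer_iff.1 hβ).2.2 with h | h
  · exact ⟨n, by simp [affLevel_apply, affActInv, h, hn]⟩
  · exact ⟨n + 1, by simp [affLevel_apply, affActInv, h, hn, add_comm]⟩

lemma notMem_firstLayerIdeal_iff {μ : V} (hμ : μ ∈ RS.pos) :
    μ ∉ RS.firstLayerIdeal v r ↔ affAct v r (-μ, 1) ∈ RS.affPos := by
  have hroot : (affAct v r (-μ, 1)).1 ∈ RS.Δ :=
    (RS.isometry_and_mapsTo_of_mem_weylGroup hw.1).2 _ (RS.neg_mem _ (RS.mem_of_mem_pos hμ))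
  have hδμ : ((-μ, 1) : V × ℝ) ∈ RS.affPos :=
    ⟨RS.neg_mem _ (RS.mem_of_mem_pos hμ), Or.inl one_pos⟩
  simp only [firstLayerIdeal, Nset, Set.mem_ofPred_eq, hμ, hδμ, true_and]
  exact ⟨(RS.mem_affPos_or_neg_mem hroot).resolve_right, RS.neg_notMem_affPos⟩

lemma affAct_mem_firstLayer {μ : V} (hμ : μ ∈ RS.pos) (hI : μ ∉ RS.firstLayerIdeal v r) :
    affAct v r (-μ, 1) ∈ RS.firstLayer := by
  have hpos := (notMem_firstLayerIdeal_iff hw hμ).1 hI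
  have hδ : (0, 1) - affAct v r (-μ, 1) = affAct v r (μ, 0) := by
    ext <;> simp [affAct]
  have hδpos := affAct_mem_affPos hw hμ
  refine RS.mem_firstLayer_iff.2 ⟨hpos, hδ ▸ hδpos, ?_⟩
  obtain ⟨n, hn⟩ := RS.exists_int_inner_eq hw.2.1 (RS.mem_of_mem_pos hμ)
  have h₀ := RS.snd_nonneg_of_mem_affPos hpos
  have h₁ := RS.snd_nonneg_of_mem_affPos hδpos
  simp only [affAct, inner_neg_left, hn, sub_neg_eq_add, zero_sub] at h₀ h₁ ⊢
  have : n = -1 ∨ n = 0 := by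
    have hlo : (-1 : ℝ) ≤ n := by linarith
    have hhi : (n : ℝ) ≤ 0 := by linarith
    have : -1 ≤ n := by exact_mod_cast hlo
    have : n ≤ 0 := by exact_mod_cast hhi
    omega
  rcases this with rfl | rfl <;> norm_num

lemma fst_affActInv_mem_pos {β : V × ℝ} (hβ : β ∈ RS.affPos) (h0 : affLevel v r β = 0) :
    (affActInv v r β).1 ∈ RS.pos := by
  have hΔ : (affActInv v r β).1 ∈ RS.Δ := RS.symm_apply_mem hw.1 hβ.1
  refine (RS.pos_or_neg _ hΔ).resolve_right fun h => RS.neg_notMem_affPos hβ ?_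
  have e : ((-(affActInv v r β).1, 0) : V × ℝ) = -affActInv v r β :=
    Prod.ext rfl (by rw [Prod.snd_neg, ← affLevel_apply, h0, neg_zero])
  simpa [e, affAct_neg, affAct_affActInv] using affAct_mem_affPos hw h

lemma mem_xiSet_of_affActInv_eq {o : Option (Fin p)} {μ : V}
    (h : affActInv v r (RS.affSimpleRoot o) = (-μ, 1)) :
    μ ∈ RS.XiSet (RS.firstLayerIdeal v r) := by
  have hα : affAct v r (-μ, 1) = RS.affSimpleRoot o := by rw [← h, affAct_affActInv]
  have hμ : μ ∈ RS.Δ := by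
    have h₁ := RS.neg_mem _ (RS.symm_apply_mem hw.1 (RS.mem_affPos_of_mem_firstLayer
      (RS.affSimpleRoot_mem_firstLayer o)).1)
    rwa [show v.symm (RS.affSimpleRoot o).1 = -μ from congrArg Prod.fst h, neg_neg] at h₁
  have hμpos : μ ∈ RS.pos := by
    refine (RS.pos_or_neg μ hμ).resolve_right fun hneg =>
      RS.affSimpleRoot_sub_δ_notMem_affPos o ?_
    have e : affAct v r (-μ, 0) = RS.affSimpleRoot o - (0, 1) := by
      rw [← hα]
      ext <;> simp [affAct]
    exact e ▸ affAct_mem_affPos hw hneg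
  have hμI : μ ∉ RS.firstLayerIdeal v r := (notMem_firstLayerIdeal_iff hw hμpos).2
    (hα ▸ RS.mem_affPos_of_mem_firstLayer (RS.affSimpleRoot_mem_firstLayer o))
  refine ⟨⟨hμpos, hμI⟩, fun μ' ⟨hμ'pos, hμ'I⟩ hle => ?_⟩
  have hd := RS.rootLe_iff.1 hle
  -- compare heights in `w(δ - μ) = w(δ - μ') + w(μ' - μ)`
  have hsplit : RS.affSimpleRoot o = affAct v r (-μ', 1) + affAct v r (μ' - μ, 0) := by
    rw [← hα, ← affAct_add]
    congr 1
    ext <;> simp only [Prod.fst_add, Prod.snd_add] <;> abel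
  have h₁ := (RS.affHt_mem_Icc_of_mem_firstLayer (affAct_mem_firstLayer hw hμ'pos hμ'I)).1
  have h₂ := ht_le_affHt_affAct hw hd
  have h₃ := RS.affHt_affSimpleRoot o
  rw [hsplit, map_add] at h₃
  rcases RS.eq_zero_or_one_le_ht hd with h | h
  · exact (sub_eq_zero.1 h).symm
  · linarith

end Dominant

lemma affLevel_affSimpleRoot_some (hv : v ∈ RS.weylGroup) (i : Fin p) :
    affLevel v r (RS.affSimpleRoot (some i)) = ⟪v r, RS.simpleRoot i⟫ := by
  simp [affLevel_apply, affSimpleRoot, affActInv, RS.inner_symm_apply hv, real_inner_comm]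

lemma affLevel_affSimpleRoot_none (hv : v ∈ RS.weylGroup) :
    affLevel v r (RS.affSimpleRoot none) = 1 - ⟪v r, RS.θ⟫ := by
  simp [affLevel_apply, affSimpleRoot, affActInv, RS.inner_symm_apply hv, real_inner_comm,
    sub_eq_add_neg]

section Maximal

variable (hmax : RS.IsMaximalPair v r)
include hmax

lemma affLevel_affSimpleRoot_le_one (o : Option (Fin p)) :
    affLevel v r (RS.affSimpleRoot o) ≤ 1 := by
  cases o with
  | none => exact hmax.2.2
  | some i => exact hmax.2.1 i

lemma exists_affActInv_eq_of_mem_xiSet {μ : V} (hμ : μ ∈ RS.XiSet (RS.firstLayerIdeal v r)) :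
    ∃ o, affActInv v r (RS.affSimpleRoot o) = (-μ, 1) := by
  obtain ⟨⟨hμpos, hμI⟩, hμmax⟩ := hμ
  have hβ := affAct_mem_firstLayer hmax.1 hμpos hμI
  have hβinv := affActInv_affAct v r (-μ, 1)
  by_cases hs : affAct v r (-μ, 1) ∈ Set.range RS.affSimpleRoot
  · obtain ⟨o, ho⟩ := hs
    exact ⟨o, ho ▸ hβinv⟩
  exfalso
  obtain ⟨β₁, hβ₁, β₂, hβ₂, hsum, hℓ₁⟩ := splitsAtLevelOne (fun _ => affLevel_int hmax.1)
    (affLevel_affSimpleRoot_le_one hmax) hβ (by rw [affLevel_apply, hβinv]) hs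
  have hℓ₂ : affLevel v r β₂ = 0 := by
    have := congrArg (affLevel v r) hsum
    rw [map_add, hℓ₁, affLevel_apply _ _ (affAct _ _ _), hβinv] at this
    linarith
  obtain ⟨γ, hγ, hβ₂inv⟩ : ∃ γ ∈ RS.pos, affActInv v r β₂ = (γ, 0) :=
    ⟨_, fst_affActInv_mem_pos hmax.1 (RS.mem_affPos_of_mem_firstLayer hβ₂) hℓ₂,
      Prod.ext rfl hℓ₂⟩
  have hβ₁inv : affActInv v r β₁ = (-(μ + γ), 1) := by
    have h := congrArg (affActInv v r) hsum
    rw [affActInv_add, hβinv, hβ₂inv] at h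
    rw [eq_sub_of_add_eq h]
    ext <;> simp only [Prod.fst_sub, Prod.snd_sub] <;> abel
  have hμγ : μ + γ ∈ RS.pos := by
    refine RS.add_mem_pos hμpos hγ ?_
    have := RS.neg_mem _ (RS.symm_apply_mem hmax.1.1 (RS.mem_affPos_of_mem_firstLayer hβ₁).1)
    rwa [show v.symm β₁.1 = -(μ + γ) from congrArg Prod.fst hβ₁inv, neg_neg] at this
  have hμγI : μ + γ ∉ RS.firstLayerIdeal v r := by
    rw [notMem_firstLayerIdeal_iff hmax.1 hμγ, ← hβ₁inv, affAct_affActInv]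
    exact RS.mem_affPos_of_mem_firstLayer hβ₁
  have := hμmax (μ + γ) ⟨hμγ, hμγI⟩ (RS.rootLe_iff.2 (by
    rw [add_sub_cancel_left]; exact RS.mem_natCone_of_mem_pos hγ))
  exact RS.ne_zero_of_mem (RS.mem_of_mem_pos hγ) (by simpa using this)

lemma xiSet_eq_image : RS.XiSet (RS.firstLayerIdeal v r) =
    (fun o => -(affActInv v r (RS.affSimpleRoot o)).1) ''
      {o | affLevel v r (RS.affSimpleRoot o) = 1} := by
  ext μ
  constructor
  · intro hμ
    obtain ⟨o, ho⟩ := exists_affActInv_eq_of_mem_xiSet hmax hμ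
    exact ⟨o, by simp [affLevel_apply, ho], by simp [ho]⟩
  · rintro ⟨o, ho, rfl⟩
    exact mem_xiSet_of_affActInv_eq hmax.1 (Prod.ext (neg_neg _).symm ho)

lemma ncard_xiSet : (RS.XiSet (RS.firstLayerIdeal v r)).ncard = RS.dmaxFaceCodim (v r) := by
  have hinj : Set.InjOn (fun o => -(affActInv v r (RS.affSimpleRoot o)).1)
      {o | affLevel v r (RS.affSimpleRoot o) = 1} := by
    intro o ho o' ho' h
    have h' : affActInv v r (RS.affSimpleRoot o) = affActInv v r (RS.affSimpleRoot o') :=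
      Prod.ext (neg_injective h) (ho.trans ho'.symm)
    exact RS.affSimpleRoot_injective (by simpa [affAct_affActInv] using congrArg (affAct v r) h')
  rw [xiSet_eq_image hmax, hinj.ncard_image, ncard_setOf_option, dmaxFaceCodim]
  simp only [affLevel_affSimpleRoot_some hmax.1.1, affLevel_affSimpleRoot_none hmax.1.1,
    sub_eq_self]

lemma apply_mem_dmax :
    v r ∈ {x : V | (∀ i, ⟪x, RS.simpleRoot i⟫ ≤ 1) ∧ 0 ≤ ⟪x, RS.θ⟫} := by
  refine ⟨fun i => ?_, ?_⟩
  · simpa [affLevel_affSimpleRoot_some hmax.1.1] using affLevel_affSimpleRoot_le_one hmax (some i)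
  · simpa [affLevel_affSimpleRoot_none hmax.1.1] using affLevel_affSimpleRoot_le_one hmax none

end Maximal

end RootSystemData

/-- Let `w = v·t_r ∈ Ŵ_max` with first layer ideal `I^w`, and
`Ξ(I^w)` the set of maximal elements of `Δ⁺ \ I^w` w.r.t. `≼`. Let
`D_max = {x : (x,α) ≤ 1 ∀α ∈ Π, (x,θ) ≥ 0}`. Then `#Ξ(I^w) = k` iff `v(r)` lies on a
face of codimension `k` of the simplex `D_max` (i.e. `v(r) ∈ D_max` and exactly `k` of
the `p + 1` defining constraints of `D_max` are active at `v(r)`). -/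
theorem statement3 {V : Type*} [NormedAddCommGroup V] [InnerProductSpace ℝ V] {p : ℕ}
    (RS : RootSystemData V p) (v : V ≃ₗ[ℝ] V) (r : V)
    (hmax : RS.IsMaximalPair v r) (k : ℕ) :
    (RS.XiSet (RS.firstLayerIdeal v r)).ncard = k ↔
      (v r ∈ {x : V | (∀ i, ⟪x, RS.simpleRoot i⟫ ≤ 1) ∧ 0 ≤ ⟪x, RS.θ⟫} ∧
        RS.dmaxFaceCodim (v r) = k) := by
  rw [RootSystemData.ncard_xiSet hmax]
  exact ⟨fun h => ⟨RootSystemData.apply_mem_dmax hmax, h⟩, And.right⟩
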